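/- arXiv:2408.10523 — 8 statements merged into one kernel-verified Lean document; each statement's English description precedes it below -/
import Mathlib

section
/- Let R be a commutative ring and S a saturated multiplicative subset of R. If S satisfies the maximal multiple condition (there exists t ∈ S such that s divides t for every s ∈ S), then the localization R_S is a finitely presented R-module; in fact R_S is isomorphic to a direct summand of R as an R-module. -/
/-!
If `t ∈ S` is a multiple of every element of `S`, then `t ∣ t²`, say `t = t² u`, and `e = t u` is an
idempotent that maps to `1` in `R_S` and kills the kernel of `R → R_S` (every `r` in that kernel
satisfies `s r = 0` for some `s ∣ t`). Moreover every `r / s` equals the image of `r c u`, where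
`t = s c`. Hence `R → R_S` is surjective and `x ↦ e r`, for any preimage `r` of `x`, is a
well-defined `R`-linear section; so `R_S` is a direct summand of `R`, hence finite projective and
finitely presented.
-/

theorem LinearMap.exists_comp_eq_id_of_ker_le {R M N : Type*} [Ring R] [AddCommGroup M]
    [AddCommGroup N] [Module R M] [Module R N] {p : M →ₗ[R] N} (hp : Function.Surjective p)
    (f : M →ₗ[R] M) (hker : LinearMap.ker p ≤ LinearMap.ker f) (hf : p ∘ₗ f = p) :
    ∃ i : N →ₗ[R] M, p ∘ₗ i = LinearMap.id := by
  refine ⟨(LinearMap.ker p).liftQ f hker ∘ₗ (p.quotKerEquivOfSurjective hp).symm.toLinearMap, ?_⟩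
  ext n
  obtain ⟨m, rfl⟩ := hp n
  have hm : (p.quotKerEquivOfSurjective hp).symm (p m) = Submodule.Quotient.mk m :=
    (LinearEquiv.symm_apply_eq _).2 rfl
  simp [hm, ← LinearMap.comp_apply, hf]

namespace IsLocalization

variable {R A : Type*} [CommRing R] [CommRing A] [Algebra R A] {S : Submonoid R}
  [IsLocalization S A] {t u : R}

theorem algebraMap_mul_eq_one_of_mul_self_mul_eq (ht : t ∈ S) (hu : t * t * u = t) :
    algebraMap R A (t * u) = 1 := by
  apply (IsLocalization.map_units A ⟨t, ht⟩).mul_left_cancel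
  rw [← map_mul, mul_one, ← mul_assoc, hu]

variable (A) in
theorem algebraMap_surjective_of_dvd (ht : t ∈ S) (hmax : ∀ s ∈ S, s ∣ t)
    (hu : t * t * u = t) : Function.Surjective (algebraMap R A) := by
  intro x
  obtain ⟨⟨r, s⟩, rfl⟩ := IsLocalization.mk'_surjective S x
  obtain ⟨c, hc⟩ := hmax s s.2
  refine ⟨r * c * u, ?_⟩
  rw [IsLocalization.eq_mk'_iff_mul_eq, ← map_mul,
    show r * c * u * s = r * (t * u) by rw [hc]; ring, map_mul,
    algebraMap_mul_eq_one_of_mul_self_mul_eq ht hu, mul_one]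

variable (A) in
theorem mul_eq_zero_of_algebraMap_eq_zero (hmax : ∀ s ∈ S, s ∣ t) {r : R}
    (hr : algebraMap R A r = 0) : t * u * r = 0 := by
  obtain ⟨s, hs⟩ := (IsLocalization.map_eq_zero_iff S A r).1 hr
  obtain ⟨c, hc⟩ := hmax s s.2
  rw [hc, show (s : R) * c * u * r = c * u * (s * r) by ring, hs, mul_zero]

variable (A) in
theorem exists_linearMap_section_of_dvd (ht : t ∈ S) (hmax : ∀ s ∈ S, s ∣ t) :
    ∃ i : A →ₗ[R] R, Algebra.linearMap R A ∘ₗ i = LinearMap.id := by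
  obtain ⟨u, hu⟩ := hmax (t * t) (mul_mem ht ht)
  replace hu : t * t * u = t := hu.symm
  refine (Algebra.linearMap R A).exists_comp_eq_id_of_ker_le
    (algebraMap_surjective_of_dvd A ht hmax hu) (LinearMap.lsmul R R (t * u))
    (fun r hr ↦ mul_eq_zero_of_algebraMap_eq_zero A hmax hr) ?_
  ext
  simp [algebraMap_mul_eq_one_of_mul_self_mul_eq ht hu]

end IsLocalization

theorem stmt0_general {R : Type*} [CommRing R] (S : Submonoid R)
    (hmax : ∃ t ∈ S, ∀ s ∈ S, s ∣ t) :
    Module.FinitePresentation R (Localization S) ∧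
      ∃ (i : Localization S →ₗ[R] R) (p : R →ₗ[R] Localization S),
        p ∘ₗ i = LinearMap.id := by
  obtain ⟨t, ht, hmax⟩ := hmax
  obtain ⟨i, hi⟩ := IsLocalization.exists_linearMap_section_of_dvd (Localization S) ht hmax
  have : Module.Projective R (Localization S) := .of_split i _ hi
  have : Module.Finite R (Localization S) :=
    .of_surjective _ (LinearMap.surjective_of_comp_eq_id _ _ hi)
  exact ⟨Module.finitePresentation_of_projective _ _, i, _, hi⟩

/-- If a saturated multiplicative subset `S` of a commutative ring `R`
satisfies the maximal multiple condition, then `R_S` is a finitely presented `R`-module;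
in fact `R_S` is (isomorphic to) a direct summand of `R` as an `R`-module. -/
theorem stmt0 {R : Type*} [CommRing R] (S : Submonoid R)
    (hsat : ∀ a b : R, a * b ∈ S → a ∈ S ∧ b ∈ S)
    (hmax : ∃ t ∈ S, ∀ s ∈ S, s ∣ t) :
    Module.FinitePresentation R (Localization S) ∧
      ∃ (i : Localization S →ₗ[R] R) (p : R →ₗ[R] Localization S),
        p ∘ₗ i = LinearMap.id :=
  stmt0_general S hmax
end

section
/- Let R be a commutative ring and S a saturated regular multiplicative subset of R (every element of S is a non-zerodivisor). If R_S is a finitely presented flat R-module, then S satisfies the maximal multiple condition, i.e., there exists t ∈ S such that s | t for all s ∈ S. -/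
/-! A common denominator `t ∈ S` of a finite generating set of the `R`-module `R_S` clears
the denominators of all of `R_S`. In particular `t • (1 / s) = r` lies in the image of `R`,
and since `R → R_S` is injective for regular `S`, this says `t = s * r`. -/

namespace IsLocalization

theorem exists_isInteger_smul_of_finite {R S : Type*} [CommSemiring R] [CommSemiring S]
    [Algebra R S] (M : Submonoid R) [IsLocalization M S] [Module.Finite R S] :
    ∃ b : M, ∀ x : S, IsInteger R ((b : R) • x) := by
  obtain ⟨G, hG⟩ := Module.Finite.fg_top (R := R) (M := S)
  obtain ⟨b, hb⟩ := exist_integer_multiples_of_finset M G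
  refine ⟨b, fun x => ?_⟩
  have hx : x ∈ Submodule.span R (G : Set S) := hG ▸ Submodule.mem_top
  induction hx using Submodule.span_induction with
  | mem g hg => exact hb g hg
  | zero => simpa only [smul_zero] using isInteger_zero
  | add x y _ _ hx hy => simpa only [smul_add] using isInteger_add hx hy
  | smul c x _ hx => rw [smul_comm]; exact isInteger_smul hx

theorem exists_forall_dvd_of_finite {R S : Type*} [CommRing R] [CommRing S] [Algebra R S]
    (M : Submonoid R) [IsLocalization M S] [Module.Finite R S] (hM : M ≤ nonZeroDivisors R) :
    ∃ t ∈ M, ∀ s ∈ M, s ∣ t := by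
  obtain ⟨t, ht⟩ := exists_isInteger_smul_of_finite M (S := S)
  refine ⟨t, t.2, fun s hs => ?_⟩
  obtain ⟨r, hr⟩ := ht (mk' S 1 ⟨s, hs⟩)
  rw [smul_mk'_one, eq_comm, mk'_eq_iff_eq_mul, ← map_mul] at hr
  exact ⟨r, by rw [IsLocalization.injective S hM hr, mul_comm]⟩

end IsLocalization

theorem stmt1_general {R : Type*} [CommRing R] (S : Submonoid R)
    (hreg : ∀ s ∈ S, s ∈ nonZeroDivisors R)
    (hfp : Module.FinitePresentation R (Localization S)) :
    ∃ t ∈ S, ∀ s ∈ S, s ∣ t :=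
  IsLocalization.exists_forall_dvd_of_finite S (S := Localization S) hreg

/-- If `S` is a saturated regular multiplicative subset of `R` and the
localization `R_S` is a finitely presented flat `R`-module, then `S` satisfies the
maximal multiple condition. -/
theorem stmt1 {R : Type*} [CommRing R] (S : Submonoid R)
    (hreg : ∀ s ∈ S, s ∈ nonZeroDivisors R)
    (hsat : ∀ a b : R, a * b ∈ S → a ∈ S ∧ b ∈ S)
    (hfp : Module.FinitePresentation R (Localization S))
    (hflat : Module.Flat R (Localization S)) :
    ∃ t ∈ S, ∀ s ∈ S, s ∣ t :=
  stmt1_general S hreg hfp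
end

section
/- Let S be a multiplicative subset of a ring R satisfying the maximal multiple condition. If R_S is a coherent ring, then R is an S-coherent ring, i.e., every finitely generated ideal of R is S-finitely presented. -/
/-!
Write a finitely generated ideal `I` as the image of `g : Rⁿ → R`. Localization is exact, so
`(ker g)_S` is the kernel of `g_S : R_Sⁿ → R_S`, whose image `I_S` is finitely presented by
coherence of `R_S`; hence `(ker g)_S` is finitely generated. Clearing denominators of finitely
many generators gives a finitely generated `L ≤ ker g` such that every element of `ker g` has a
multiple by some `s ∈ S` in `L`, and the maximal multiple `t` of `S` works for all of them at
once.
-/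

/-- `M` is `S`-finite: some finitely generated submodule `L` satisfies `s • M ⊆ L`. -/
def IsSFinite {R : Type*} [CommRing R] (S : Submonoid R) (M : Type*) [AddCommGroup M]
    [Module R M] : Prop :=
  ∃ s ∈ S, ∃ L : Submodule R M, L.FG ∧ ∀ m : M, s • m ∈ L

/-- `M` is `S`-finitely presented: there is an exact sequence `0 → K → F → M → 0`
with `F` finitely generated free and `K` `S`-finite. -/
def IsSFinitelyPresented {R : Type*} [CommRing R] (S : Submonoid R) (M : Type*)
    [AddCommGroup M] [Module R M] : Prop :=
  ∃ (n : ℕ) (f : (Fin n → R) →ₗ[R] M), Function.Surjective f ∧ IsSFinite S (LinearMap.ker f)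

/-- `R` is `S`-coherent: every finitely generated ideal is `S`-finitely presented. -/
def IsSCoherent (R : Type*) [CommRing R] (S : Submonoid R) : Prop :=
  ∀ I : Ideal R, I.FG → IsSFinitelyPresented S I

open Submodule LinearMap

theorem Submodule.exists_fg_le_smul_mem_of_fg_localized' {R R' M M' : Type*} [CommSemiring R]
    [CommSemiring R'] [Algebra R R'] [AddCommMonoid M] [Module R M] [AddCommMonoid M']
    [Module R M'] [Module R' M'] [IsScalarTower R R' M'] (S : Submonoid R) [IsLocalization S R']
    (f : M →ₗ[R] M') [IsLocalizedModule S f] {N : Submodule R M}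
    (h : (N.localized' R' S f).FG) :
    ∃ L ≤ N, L.FG ∧ ∀ x ∈ N, ∃ s : S, s • x ∈ L := by
  classical
  rw [localized'_eq_span, fg_span_iff_fg_span_finset_subset] at h
  obtain ⟨T, hTN, hspan⟩ := h
  obtain ⟨F, hFN, rfl⟩ := Finset.subset_set_image_iff.mp hTN
  refine ⟨span R F, span_le.mpr hFN, fg_span F.finite_toSet, fun x hx => ?_⟩
  have hfx : f x ∈ span R' (f '' F) := by
    rw [← Finset.coe_image, ← hspan]
    exact subset_span ⟨x, hx, rfl⟩
  obtain ⟨s, hs⟩ := multiple_mem_span_of_mem_localization_span S R' _ _ hfx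
  rw [← map_span] at hs
  obtain ⟨y, hy, hys⟩ := hs
  obtain ⟨c, hc⟩ := IsLocalizedModule.exists_of_eq (S := S) (f := f)
    (hys.trans (f.map_smul_of_tower s x).symm)
  exact ⟨c * s, by rw [mul_smul, ← hc]; exact smul_mem _ _ hy⟩

theorem isSFinite_of_forall_exists_smul_mem {R M : Type*} [CommRing R] [AddCommGroup M]
    [Module R M] {S : Submonoid R} (hmax : ∃ t ∈ S, ∀ s ∈ S, s ∣ t) {N L : Submodule R M}
    (hLN : L ≤ N) (hL : L.FG) (h : ∀ x ∈ N, ∃ s : S, s • x ∈ L) : IsSFinite S N := by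
  obtain ⟨t, htS, ht⟩ := hmax
  refine ⟨t, htS, L.comap N.subtype,
    fg_of_fg_map_injective N.subtype N.injective_subtype ?_, fun x => ?_⟩
  · rwa [map_comap_subtype, inf_eq_right.mpr hLN]
  obtain ⟨s, hs⟩ := h x x.2
  obtain ⟨c, rfl⟩ := ht s s.2
  rw [mem_comap, mul_comm, mul_smul]
  exact L.smul_mem c hs

theorem LinearMap.ker_fg_of_finitePresentation_range {A M N : Type*} [CommRing A]
    [AddCommGroup M] [Module A M] [Module.Finite A M] [AddCommGroup N] [Module A N]
    (h : M →ₗ[A] N) [Module.FinitePresentation A (range h)] : (ker h).FG :=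
  ker_rangeRestrict h ▸ Module.FinitePresentation.fg_ker _ h.surjective_rangeRestrict

/-- If `S` satisfies the maximal multiple condition and `R_S` is a coherent
ring, then `R` is `S`-coherent. -/
theorem stmt2 {R : Type*} [CommRing R] (S : Submonoid R)
    (hmax : ∃ t ∈ S, ∀ s ∈ S, s ∣ t)
    (hcoh : ∀ I : Ideal (Localization S), I.FG → Module.FinitePresentation (Localization S) I) :
    IsSCoherent R S := by
  intro I hI
  obtain ⟨n, a, rfl⟩ := Submodule.fg_iff_exists_fin_generating_family.mp hI
  rw [← Fintype.range_linearCombination]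
  set g := Fintype.linearCombination R a
  let ι : (Fin n → R) →ₗ[R] Fin n → Localization S := .pi fun i =>
    Algebra.linearMap R (Localization S) ∘ₗ .proj i
  set gS := (IsLocalizedModule.map S ι (Algebra.linearMap R (Localization S)) g)
    |>.extendScalarsOfIsLocalization S (Localization S)
  have := hcoh (range gS) (range_eq_map gS ▸ Module.Finite.fg_top.map gS)
  have hker : ((ker g).localized' (Localization S) S ι).FG := by
    rw [localized'_ker_eq_ker_localizedMap _ S ι (Algebra.linearMap R (Localization S)) g]
    exact ker_fg_of_finitePresentation_range gS
  obtain ⟨L, hLN, hLfg, hL⟩ := exists_fg_le_smul_mem_of_fg_localized' S ι hker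
  exact ⟨n, g.rangeRestrict, g.surjective_rangeRestrict,
    (ker_rangeRestrict g).symm ▸ isSFinite_of_forall_exists_smul_mem hmax hLN hLfg hL⟩
end

section
/- Let D be an integral domain that is not a field, with quotient field Q, and let R = D(+)Q be the trivial extension (idealization) of D by Q. Let S = {(d,0) : d ∈ D, d ≠ 0}. Then S is a multiplicative subset of R, and for any nonzero q ∈ Q, the annihilator (0 :_R (0,q)) equals 0(+)Q and is not an S-finite ideal of R; consequently R is not an S-coherent ring. -/
set_option synthInstance.maxHeartbeats 1000000
set_option maxHeartbeats 1000000

/-- Shortcut instance (the canonical commutative ring structure on the idealization). -/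
noncomputable instance idealizationCommRing (D : Type*) [CommRing D] [IsDomain D] :
    CommRing (TrivSqZeroExt D (FractionRing D)) := inferInstance

section Aux

variable {R : Type*} [CommRing R] (S : Submonoid R)

lemma isSFinite_of_surjective {M N : Type*} [AddCommGroup M] [Module R M]
    [AddCommGroup N] [Module R N] (φ : M →ₗ[R] N) (hφ : Function.Surjective φ)
    (h : IsSFinite S M) : IsSFinite S N := by
  obtain ⟨s, hs, L, hL, hmem⟩ := h
  refine ⟨s, hs, L.map φ, hL.map φ, fun n => ?_⟩
  obtain ⟨m, rfl⟩ := hφ n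
  rw [← map_smul]
  exact Submodule.mem_map_of_mem (hmem m)

lemma isSFinite_prod {M : Type*} [AddCommGroup M] [Module R M]
    (h : IsSFinite S M) : IsSFinite S (R × M) := by
  obtain ⟨s, hs, L, hL, hmem⟩ := h
  have htop : (⊤ : Submodule R R).FG := ⟨{1}, by simp⟩
  refine ⟨s, hs, (⊤ : Submodule R R).prod L, htop.prod hL, fun p => ?_⟩
  exact Submodule.mem_prod.mpr ⟨Submodule.mem_top, hmem p.2⟩

lemma ker_isSFinite {M : Type*} [AddCommGroup M] [Module R M] {n : ℕ}
    (f : (Fin n → R) →ₗ[R] M) (hf : Function.Surjective f)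
    (hker : IsSFinite S (LinearMap.ker f)) (g : R →ₗ[R] M)
    (hg : Function.Surjective g) : IsSFinite S (LinearMap.ker g) := by
  classical
  choose c hc using fun i => hg (f (Pi.basisFun R (Fin n) i))
  set h : (Fin n → R) →ₗ[R] R := (Pi.basisFun R (Fin n)).constr R c with hh
  have hgh : ∀ v, g (h v) = f v := by
    have : g.comp h = f := (Pi.basisFun R (Fin n)).ext fun i => by
      rw [LinearMap.comp_apply, hh, Module.Basis.constr_basis, hc]
    exact fun v => LinearMap.congr_fun this v
  obtain ⟨c0, hc0⟩ := hf (g 1)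
  set k : R →ₗ[R] (Fin n → R) := LinearMap.toSpanSingleton R _ c0 with hk
  have hfk : ∀ x : R, f (k x) = g x := by
    intro x
    have h1 : k x = x • c0 := rfl
    rw [h1, map_smul, hc0, ← map_smul, smul_eq_mul, mul_one]
  let ψ0 : R × (LinearMap.ker f) →ₗ[R] R :=
    (LinearMap.id - h ∘ₗ k) ∘ₗ LinearMap.fst R R (LinearMap.ker f)
      + (h ∘ₗ (LinearMap.ker f).subtype) ∘ₗ LinearMap.snd R R (LinearMap.ker f)
  have hψ0 : ∀ p : R × (LinearMap.ker f), ψ0 p = p.1 - h (k p.1) + h p.2.1 := by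
    intro p
    simp [ψ0, LinearMap.sub_apply]
  have hmemk : ∀ p : R × (LinearMap.ker f), ψ0 p ∈ LinearMap.ker g := by
    intro p
    rw [LinearMap.mem_ker, hψ0, map_add, map_sub, hgh, hgh, hfk]
    have h4 : f p.2.1 = 0 := p.2.2
    rw [h4, sub_self, zero_add]
  let ψ : R × (LinearMap.ker f) →ₗ[R] LinearMap.ker g := ψ0.codRestrict _ hmemk
  have hsurj : Function.Surjective ψ := by
    rintro ⟨y, hy⟩
    have hky : k y ∈ LinearMap.ker f := by
      rw [LinearMap.mem_ker, hfk]; exact hy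
    refine ⟨(y, ⟨k y, hky⟩), ?_⟩
    apply Subtype.ext
    show ψ0 (y, ⟨k y, hky⟩) = y
    rw [hψ0]
    simp
  exact isSFinite_of_surjective S ψ hsurj (isSFinite_prod S hker)

end Aux

/-- For a non-field domain `D` with fraction field `Q`, the idealization
`R = D(+)Q` and `S = {(d,0) : d ≠ 0}`, the annihilator of `(0,q)` (for `q ≠ 0`) is
`0(+)Q`, it is not `S`-finite, and `R` is not `S`-coherent. -/
theorem stmt3 {D : Type*} [CommRing D] [IsDomain D] (hD : ¬ IsField D)
    (S : Submonoid (TrivSqZeroExt D (FractionRing D)))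
    (hS : ∀ x : TrivSqZeroExt D (FractionRing D), x ∈ S ↔ x.snd = 0 ∧ x.fst ≠ 0)
    (q : FractionRing D) (hq : q ≠ 0) :
    (∀ x : TrivSqZeroExt D (FractionRing D),
        x ∈ (Submodule.span (TrivSqZeroExt D (FractionRing D))
          {(TrivSqZeroExt.inr q : TrivSqZeroExt D (FractionRing D))}).annihilator ↔ x.fst = 0) ∧
    ¬ IsSFinite S ((Submodule.span (TrivSqZeroExt D (FractionRing D))
          {(TrivSqZeroExt.inr q : TrivSqZeroExt D (FractionRing D))}).annihilator) ∧
    ¬ IsSCoherent (TrivSqZeroExt D (FractionRing D)) S := by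
  have hinj : Function.Injective (algebraMap D (FractionRing D)) :=
    IsFractionRing.injective D (FractionRing D)
  -- multiplication by `inr w`
  have hprod : ∀ (x : TrivSqZeroExt D (FractionRing D)) (w : FractionRing D),
      x * TrivSqZeroExt.inr w = TrivSqZeroExt.inr (x.fst • w) := by
    intro x w
    apply TrivSqZeroExt.ext
    · rw [TrivSqZeroExt.fst_mul, TrivSqZeroExt.fst_inr, TrivSqZeroExt.fst_inr, mul_zero]
    · rw [TrivSqZeroExt.snd_mul, TrivSqZeroExt.snd_inr, TrivSqZeroExt.fst_inr,
        TrivSqZeroExt.snd_inr]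
      show x.fst • w + MulOpposite.op (0 : D) • x.snd = x.fst • w
      rw [MulOpposite.op_zero, add_eq_left]
      exact zero_smul Dᵐᵒᵖ x.snd
  have hmul : ∀ x : TrivSqZeroExt D (FractionRing D),
      x * TrivSqZeroExt.inr q = 0 ↔ x.fst = 0 := by
    intro x
    rw [hprod x q]
    constructor
    · intro h
      have h2 : x.fst • q = (0 : FractionRing D) := by
        have := congrArg TrivSqZeroExt.snd h
        simpa using this
      have h3 : algebraMap D (FractionRing D) x.fst * q = 0 := by
        rw [← Algebra.smul_def]; exact h2
      rcases mul_eq_zero.mp h3 with h4 | h4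
      · exact hinj (by rw [h4, map_zero])
      · exact absurd h4 hq
    · intro hx0
      have hz : x.fst • q = (0 : FractionRing D) := by
        rw [hx0]; exact zero_smul D q
      rw [hz, TrivSqZeroExt.inr_zero]
  have part1 : ∀ x : TrivSqZeroExt D (FractionRing D),
      x ∈ (Submodule.span (TrivSqZeroExt D (FractionRing D))
        {(TrivSqZeroExt.inr q : TrivSqZeroExt D (FractionRing D))}).annihilator ↔
        x.fst = 0 := by
    intro x
    rw [Submodule.mem_annihilator_span_singleton, smul_eq_mul, hmul]
  set A : Ideal (TrivSqZeroExt D (FractionRing D)) :=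
    (Submodule.span (TrivSqZeroExt D (FractionRing D))
      {(TrivSqZeroExt.inr q : TrivSqZeroExt D (FractionRing D))}).annihilator with hA
  have part2 : ¬ IsSFinite S A := by
    rintro ⟨s, hsS, L, ⟨G, hG⟩, hcl⟩
    obtain ⟨hs2, hs1⟩ := (hS s).mp hsS
    set T : Submodule D (FractionRing D) :=
      Submodule.span D ((fun t : A => (t : TrivSqZeroExt D (FractionRing D)).snd) '' ↑G) with hT
    have hsnd : ∀ z : A, z ∈ (Submodule.span (TrivSqZeroExt D (FractionRing D)) (↑G : Set A)) →
        (z : TrivSqZeroExt D (FractionRing D)).snd ∈ T := by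
      intro z hz
      induction hz using Submodule.span_induction with
      | mem t ht => exact Submodule.subset_span ⟨t, ht, rfl⟩
      | zero => simpa using T.zero_mem
      | add a b _ _ ha hb => simpa using T.add_mem ha hb
      | smul r a _ ha =>
        have hfst : (a : TrivSqZeroExt D (FractionRing D)).fst = 0 := (part1 _).mp a.2
        have ha1 : (a : TrivSqZeroExt D (FractionRing D)) =
            TrivSqZeroExt.inr (a : TrivSqZeroExt D (FractionRing D)).snd :=
          TrivSqZeroExt.ext (by rw [hfst, TrivSqZeroExt.fst_inr])
            (TrivSqZeroExt.snd_inr _ _).symm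
        have heq : ((r • a : A) : TrivSqZeroExt D (FractionRing D)).snd =
            r.fst • (a : TrivSqZeroExt D (FractionRing D)).snd := by
          rw [Submodule.coe_smul, smul_eq_mul]
          conv_lhs => rw [ha1]
          rw [hprod, TrivSqZeroExt.snd_inr]
        rw [heq]
        exact T.smul_mem _ ha
    have hdw : ∀ w : FractionRing D, s.fst • w ∈ T := by
      intro w
      have hmA : (TrivSqZeroExt.inr w : TrivSqZeroExt D (FractionRing D)) ∈ A :=
        (part1 _).mpr (TrivSqZeroExt.fst_inr _ _)
      have hmem := hcl ⟨TrivSqZeroExt.inr w, hmA⟩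
      rw [← hG] at hmem
      have h2 := hsnd _ hmem
      have h3 : ((s • (⟨TrivSqZeroExt.inr w, hmA⟩ : A) : A) :
          TrivSqZeroExt D (FractionRing D)).snd = s.fst • w := by
        rw [Submodule.coe_smul, smul_eq_mul, hprod, TrivSqZeroExt.snd_inr]
      rwa [h3] at h2
    have hd0 : algebraMap D (FractionRing D) s.fst ≠ 0 := fun h =>
      hs1 (hinj (by rw [h, map_zero]))
    have hTtop : T = ⊤ := by
      rw [Submodule.eq_top_iff']
      intro w
      have e : s.fst • ((algebraMap D (FractionRing D) s.fst)⁻¹ * w) = w := by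
        rw [Algebra.smul_def, ← mul_assoc, mul_inv_cancel₀ hd0, one_mul]
      exact e ▸ hdw ((algebraMap D (FractionRing D) s.fst)⁻¹ * w)
    have hTfg : T.FG := Submodule.fg_span (G.finite_toSet.image _)
    haveI : Module.Finite D (FractionRing D) := Module.finite_def.mpr (hTtop ▸ hTfg)
    exact hD ((Algebra.IsIntegral.isField_iff_isField hinj).mpr
      (Field.toIsField (FractionRing D)))
  refine ⟨part1, part2, ?_⟩
  intro hC
  obtain ⟨n, f, hf, hker⟩ := hC (Submodule.span (TrivSqZeroExt D (FractionRing D))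
      {(TrivSqZeroExt.inr q : TrivSqZeroExt D (FractionRing D))})
    (Submodule.fg_span_singleton _)
  have hmemI : (TrivSqZeroExt.inr q : TrivSqZeroExt D (FractionRing D)) ∈
      Submodule.span (TrivSqZeroExt D (FractionRing D))
        {(TrivSqZeroExt.inr q : TrivSqZeroExt D (FractionRing D))} :=
    Submodule.mem_span_singleton_self _
  set g : TrivSqZeroExt D (FractionRing D) →ₗ[TrivSqZeroExt D (FractionRing D)]
      (Submodule.span (TrivSqZeroExt D (FractionRing D))
        {(TrivSqZeroExt.inr q : TrivSqZeroExt D (FractionRing D))}) :=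
    LinearMap.toSpanSingleton _ _ ⟨_, hmemI⟩ with hg'
  have hg : Function.Surjective g := by
    rintro ⟨y, hy⟩
    obtain ⟨r, hr⟩ := Submodule.mem_span_singleton.mp hy
    refine ⟨r, Subtype.ext ?_⟩
    simpa [hg', LinearMap.toSpanSingleton_apply] using hr
  have hkg : LinearMap.ker g = A := by
    ext x
    rw [LinearMap.mem_ker, hA, Submodule.mem_annihilator_span_singleton]
    constructor
    · intro hx
      have := congrArg Subtype.val hx
      simpa [hg', LinearMap.toSpanSingleton_apply] using this
    · intro hx
      apply Subtype.ext
      simpa [hg', LinearMap.toSpanSingleton_apply] using hx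
  have hfin := ker_isSFinite S f hf hker g hg
  rw [hkg] at hfin
  exact part2 hfin
end

section
/- Let R be a commutative ring, S a multiplicative subset, M an R-module, and f : M → F an S-flat preenvelope of M. Then the localized map f_S : M_S → F_S is a flat preenvelope of M_S in the category of R_S-modules. -/
/-!
An `R_S`-module `N` is its own localization at `S`, so a flat `R_S`-module is `S`-flat when
viewed as an `R`-module. Hence an `R_S`-linear map `g : M_S → N` restricts to `M → N`, which
factors through the `S`-flat preenvelope `f`; the factorization `F → N` then extends
to `F_S → N` because `S` acts invertibly on `N`.
-/

section LocalizedModule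

variable {R : Type*} [CommRing R] (S : Submonoid R)
  {N : Type*} [AddCommGroup N] [Module R N] [Module (Localization S) N]
  [IsScalarTower R (Localization S) N]

noncomputable def LocalizedModule.equivSelfOfIsScalarTower :
    LocalizedModule S N ≃ₗ[Localization S] N :=
  haveI := isLocalizedModule_id S N (Localization S)
  (IsLocalizedModule.iso S (LinearMap.id : N →ₗ[R] N)).extendScalarsOfIsLocalization S
    (Localization S)

theorem Module.Flat.localizedModule_of_isScalarTower [Module.Flat (Localization S) N] :
    Module.Flat (Localization S) (LocalizedModule S N) :=
  Module.Flat.of_linearEquiv (LocalizedModule.equivSelfOfIsScalarTower S)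

theorem IsLocalizedModule.exists_comp_map_eq {M M' F F' : Type*}
    [AddCommGroup M] [Module R M] [AddCommGroup M'] [Module R M'] [Module (Localization S) M']
    [AddCommGroup F] [Module R F] [AddCommGroup F'] [Module R F'] [Module (Localization S) F']
    [IsScalarTower R (Localization S) M'] [IsScalarTower R (Localization S) F']
    (fM : M →ₗ[R] M') [IsLocalizedModule S fM] (fF : F →ₗ[R] F') [IsLocalizedModule S fF]
    (f : M →ₗ[R] F) (g : M' →ₗ[Localization S] N) (h₀ : F →ₗ[R] N)
    (hh₀ : h₀ ∘ₗ f = g.restrictScalars R ∘ₗ fM) :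
    ∃ h : F' →ₗ[Localization S] N, ∀ x, h (map S fM fF f x) = g x := by
  have hunits := (isLocalizedModule_id S N (Localization S)).map_units
  let h₁ := lift S fF h₀ hunits
  refine ⟨h₁.extendScalarsOfIsLocalization S (Localization S), fun x => ?_⟩
  suffices h₁ ∘ₗ map S fM fF f = g.restrictScalars R from LinearMap.congr_fun this x
  refine ext S fM hunits ?_
  rw [LinearMap.comp_assoc, map_comp, ← LinearMap.comp_assoc, lift_comp, hh₀]

end LocalizedModule

theorem stmt6_general {R : Type u} [CommRing R] (S : Submonoid R)
    {M F : Type u} [AddCommGroup M] [Module R M] [AddCommGroup F] [Module R F]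
    (f : M →ₗ[R] F)
    (hpre : ∀ (N : Type u) [AddCommGroup N] [Module R N],
      Module.Flat (Localization S) (LocalizedModule S N) →
      ∀ g : M →ₗ[R] N, ∃ h : F →ₗ[R] N, h ∘ₗ f = g) :
    ∀ (N : Type u) [AddCommGroup N] [Module (Localization S) N], Module.Flat (Localization S) N →
      ∀ g : LocalizedModule S M →ₗ[Localization S] N,
        ∃ h : LocalizedModule S F →ₗ[Localization S] N,
          ∀ x : LocalizedModule S M,
            h ((IsLocalizedModule.map S (LocalizedModule.mkLinearMap S M)
              (LocalizedModule.mkLinearMap S F) f) x) = g x := by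
  intro N _ _ _ g
  let _ : Module R N := Module.compHom N (algebraMap R (Localization S))
  have : IsScalarTower R (Localization S) N := IsScalarTower.of_compHom R (Localization S) N
  obtain ⟨h₀, hh₀⟩ := hpre N (Module.Flat.localizedModule_of_isScalarTower S)
    (g.restrictScalars R ∘ₗ LocalizedModule.mkLinearMap S M)
  exact IsLocalizedModule.exists_comp_map_eq S _ _ f g h₀ hh₀

/-- If `f : M → F` is an `S`-flat preenvelope of the `R`-module `M`
(where an `R`-module `N` is `S`-flat when `N_S` is flat over `R_S`), then the localized
map `f_S : M_S → F_S` is a flat preenvelope of `M_S` as `R_S`-modules. -/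
theorem stmt6 {R : Type u} [CommRing R] (S : Submonoid R)
    {M F : Type u} [AddCommGroup M] [Module R M] [AddCommGroup F] [Module R F]
    (f : M →ₗ[R] F)
    (hF : Module.Flat (Localization S) (LocalizedModule S F))
    (hpre : ∀ (N : Type u) [AddCommGroup N] [Module R N],
      Module.Flat (Localization S) (LocalizedModule S N) →
      ∀ g : M →ₗ[R] N, ∃ h : F →ₗ[R] N, h ∘ₗ f = g) :
    ∀ (N : Type u) [AddCommGroup N] [Module (Localization S) N], Module.Flat (Localization S) N →
      ∀ g : LocalizedModule S M →ₗ[Localization S] N,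
        ∃ h : LocalizedModule S F →ₗ[Localization S] N,
          ∀ x : LocalizedModule S M,
            h ((IsLocalizedModule.map S (LocalizedModule.mkLinearMap S M)
              (LocalizedModule.mkLinearMap S F) f) x) = g x :=
  stmt6_general S f hpre
end

section
/- Let R be a valuation domain with value group ℤ × ℤ (lexicographic order), x ∈ R with v(x) = (0,1), y ∈ R with v(y) = (1,0), and S = {xⁱ : i ≥ 0}. Let M = ∏_{i≥1} R/xⁱR and m = (1̄, 1̄, …) ∈ M. Then the image of m in M_S is nonzero (since xⁱm ≠ 0 for all i), but y·m maps to 0 in M_S; hence M_S has a nonzero torsion element, M_S is not a flat R_S-module, and M is not an S-flat R-module. -/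
/-!
Every power of `x` acts nontrivially on `m`, since `x ^ (i + 1)` does not divide `x ^ i`; so the
image of `m` in `M_S` is nonzero. On the other hand `v (x ^ (i + 1)) = (0, i + 1)` lies below
`v y = (1, 0)`, so `y` lies in every ideal `x ^ (i + 1) R` and kills `m`. Since `y` stays a
nonzerodivisor in `R_S`, the image of `m` is a nonzero torsion element of `M_S`, which a flat
`R_S`-module cannot have.
-/

/-- The lexicographic order on `ℤ × ℤ`. -/
def lexLe (a b : ℤ × ℤ) : Prop := a.1 < b.1 ∨ (a.1 = b.1 ∧ a.2 ≤ b.2)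

open scoped nonZeroDivisors

theorem not_lexLe_add_of_snd_pos {a b : ℤ × ℤ} (hb : b.1 = 0) (hb' : 0 < b.2) :
    ¬ lexLe (a + b) a := by
  rintro (h | ⟨-, h⟩) <;> simp only [Prod.fst_add, Prod.snd_add] at h <;> omega

theorem map_pow_of_map_mul {R G : Type*} [MonoidWithZero R] [NoZeroDivisors R] [Nontrivial R]
    [AddCommGroup G] {v : R → G} (hmul : ∀ a b : R, a ≠ 0 → b ≠ 0 → v (a * b) = v a + v b)
    {a : R} (ha : a ≠ 0) (n : ℕ) : v (a ^ n) = n • v a := by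
  induction n with
  | zero =>
    have h1 := hmul 1 1 one_ne_zero one_ne_zero
    rw [mul_one] at h1
    simpa using h1
  | succ n ih =>
    rw [pow_succ, hmul _ _ (pow_ne_zero n ha) ha, ih, succ_nsmul]

theorem Pi.smul_quotient_mk_one_eq_zero_iff {R ι : Type*} [CommRing R] {I : ι → Ideal R} (r : R) :
    (r • fun i => (Submodule.Quotient.mk 1 : R ⧸ I i)) = 0 ↔ ∀ i, r ∈ I i := by
  simp only [funext_iff, Pi.smul_apply, Pi.zero_apply, ← Submodule.Quotient.mk_smul, smul_eq_mul,
    mul_one, Submodule.Quotient.mk_eq_zero]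

theorem LocalizedModule.mkLinearMap_eq_zero_of_smul_eq_zero {R M : Type*} [CommRing R]
    [AddCommGroup M] [Module R M] (S : Submonoid R)
    [Module.Flat (Localization S) (LocalizedModule S M)] {r : R} (hr : r ∈ R⁰) {m : M}
    (hm : r • m = 0) : LocalizedModule.mkLinearMap S M m = 0 := by
  have hreg : IsSMulRegular (LocalizedModule S M) (algebraMap R (Localization S) r) :=
    Module.Flat.isSMulRegular_of_nonZeroDivisors
      (IsLocalization.nonZeroDivisors_le_comap S (Localization S) hr)
  apply hreg
  change _ • _ = _ • _
  rw [algebraMap_smul, ← map_smul, hm, map_zero, smul_zero]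

theorem stmt9_general {R : Type*} [CommRing R] [IsDomain R]
    (v : R → ℤ × ℤ)
    (hdvd : ∀ a b : R, a ≠ 0 → b ≠ 0 → (a ∣ b ↔ lexLe (v a) (v b)))
    (hmul : ∀ a b : R, a ≠ 0 → b ≠ 0 → v (a * b) = v a + v b)
    (x y : R) (hx : x ≠ 0) (hy : y ≠ 0)
    (hvx : v x = (0, 1)) (hvy : v y = (1, 0)) :
    ∀ m : (∀ i : ℕ, R ⧸ Ideal.span {x ^ (i + 1)}),
      (m = fun i => Submodule.Quotient.mk 1) →
      (∀ i : ℕ, x ^ i • m ≠ 0) ∧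
      LocalizedModule.mkLinearMap (Submonoid.powers x) (∀ i : ℕ, R ⧸ Ideal.span {x ^ (i + 1)}) m ≠ 0 ∧
      LocalizedModule.mkLinearMap (Submonoid.powers x) (∀ i : ℕ, R ⧸ Ideal.span {x ^ (i + 1)}) (y • m) = 0 ∧
      ¬ Module.Flat (Localization (Submonoid.powers x))
          (LocalizedModule (Submonoid.powers x) (∀ i : ℕ, R ⧸ Ideal.span {x ^ (i + 1)})) := by
  intro m hm
  have hpow : ∀ i : ℕ, x ^ i ≠ 0 := fun i => pow_ne_zero i hx
  have hsmul_m : ∀ r : R, r • m = 0 ↔ ∀ i : ℕ, x ^ (i + 1) ∣ r := fun r => by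
    simp only [hm, Pi.smul_quotient_mk_one_eq_zero_iff, Ideal.mem_span_singleton]
  have hm_ne : ∀ i : ℕ, x ^ i • m ≠ 0 := fun i h => by
    have hi := (hsmul_m _).mp h i
    rw [hdvd _ _ (hpow _) (hpow _), pow_succ, hmul _ _ (hpow i) hx, hvx] at hi
    exact not_lexLe_add_of_snd_pos rfl one_pos hi
  have hym : y • m = 0 := (hsmul_m y).mpr fun _ => by
    rw [hdvd _ _ (hpow _) hy, map_pow_of_map_mul hmul hx, hvx, hvy]
    exact Or.inl (by simp)
  have hmk_ne : LocalizedModule.mkLinearMap (Submonoid.powers x)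
      (∀ i : ℕ, R ⧸ Ideal.span {x ^ (i + 1)}) m ≠ 0 := fun h => by
    obtain ⟨_, ⟨i, rfl⟩, hi⟩ := LocalizedModule.mem_ker_mkLinearMap_iff.mp h
    exact hm_ne i hi
  refine ⟨hm_ne, hmk_ne, by rw [hym, map_zero], fun _ => hmk_ne ?_⟩
  exact LocalizedModule.mkLinearMap_eq_zero_of_smul_eq_zero _ (mem_nonZeroDivisors_of_ne_zero hy) hym

/-- For a valuation domain `R` with value group `ℤ × ℤ` (lex), `v x = (0,1)`,
`v y = (1,0)`, `S = {xⁱ}`, and `M = ∏_{i ≥ 1} R/xⁱR` with `m = (1̄, 1̄, …)`: `xⁱ • m ≠ 0`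
for all `i`, the image of `m` in `M_S` is nonzero, `y • m` maps to `0` in `M_S`; hence
`M_S` is not a flat `R_S`-module and `M` is not `S`-flat. -/
theorem stmt9 {R : Type*} [CommRing R] [IsDomain R] [ValuationRing R]
    (v : R → ℤ × ℤ)
    (hdvd : ∀ a b : R, a ≠ 0 → b ≠ 0 → (a ∣ b ↔ lexLe (v a) (v b)))
    (hmul : ∀ a b : R, a ≠ 0 → b ≠ 0 → v (a * b) = v a + v b)
    (x y : R) (hx : x ≠ 0) (hy : y ≠ 0)
    (hvx : v x = (0, 1)) (hvy : v y = (1, 0)) :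
    ∀ m : (∀ i : ℕ, R ⧸ Ideal.span {x ^ (i + 1)}),
      (m = fun i => Submodule.Quotient.mk 1) →
      (∀ i : ℕ, x ^ i • m ≠ 0) ∧
      LocalizedModule.mkLinearMap (Submonoid.powers x) (∀ i : ℕ, R ⧸ Ideal.span {x ^ (i + 1)}) m ≠ 0 ∧
      LocalizedModule.mkLinearMap (Submonoid.powers x) (∀ i : ℕ, R ⧸ Ideal.span {x ^ (i + 1)}) (y • m) = 0 ∧
      ¬ Module.Flat (Localization (Submonoid.powers x))
          (LocalizedModule (Submonoid.powers x) (∀ i : ℕ, R ⧸ Ideal.span {x ^ (i + 1)})) :=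
  stmt9_general v hdvd hmul x y hx hy hvx hvy
end

section
/- Let R be a commutative ring, S a multiplicative subset with an element t ∈ S such that every s ∈ S divides t, and assume S is saturated. Then there exists a ∈ S such that ta is idempotent, R ≅ Rta × R(1−ta) as rings, and R_S ≅ R_{ta} ≅ Rta. -/
/-! Since `t * t ∈ S` divides `t`, we have `t = t * t * a`; saturation puts `a` in `S`, and
`e = t * a` is an idempotent of `S` divisible by every element of `S`. Inverting `S` is then the
same as inverting the single idempotent `e`, which is the projection onto the factor `R ⧸ (1 - e)`
of the splitting `R ≅ R ⧸ (1 - e) × R ⧸ (e)`. -/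

theorem Submonoid.exists_mem_isIdempotentElem_mul {M : Type*} [CommMonoid M] (S : Submonoid M)
    (hsat : ∀ a b : M, a * b ∈ S → a ∈ S ∧ b ∈ S) {t : M} (ht : t ∈ S)
    (hmax : ∀ s ∈ S, s ∣ t) : ∃ a ∈ S, IsIdempotentElem (t * a) := by
  obtain ⟨a, hta⟩ := hmax (t * t) (S.mul_mem ht ht)
  have hta' : t * (t * a) ∈ S := by rwa [← mul_assoc, ← hta]
  refine ⟨a, (hsat t a (hsat t (t * a) hta').2).2, ?_⟩
  calc t * a * (t * a) = t * t * a * a := by rw [mul_mul_mul_comm, ← mul_assoc]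
    _ = t * a := by rw [← hta]

theorem IsLocalization.of_away_of_forall_dvd {R T : Type*} [CommRing R] [CommRing T]
    [Algebra R T] {S : Submonoid R} {e : R} (he : e ∈ S) (hdvd : ∀ s ∈ S, s ∣ e)
    [IsLocalization.Away e T] : IsLocalization S T :=
  of_le_of_exists_dvd (Submonoid.powers e) S (Submonoid.powers_le.mpr he)
    fun s hs ↦ ⟨e, Submonoid.mem_powers e, hdvd s hs⟩

/-- If `S` is saturated and `t ∈ S` is divisible by every element of `S`,
then there is `a ∈ S` with `t * a` idempotent, `R ≅ R/(1 - ta) × R/(ta)`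
(i.e. `R ≅ Rta ⊕ R(1 - ta)`), and `R_S ≅ R_{ta} ≅ Rta`. -/
theorem stmt15 {R : Type*} [CommRing R] (S : Submonoid R)
    (hsat : ∀ a b : R, a * b ∈ S → a ∈ S ∧ b ∈ S)
    (t : R) (ht : t ∈ S) (hmax : ∀ s ∈ S, s ∣ t) :
    ∃ a ∈ S, IsIdempotentElem (t * a) ∧
      Nonempty (R ≃+* (R ⧸ Ideal.span {1 - t * a}) × (R ⧸ Ideal.span ({t * a} : Set R))) ∧
      Nonempty (Localization S ≃+* Localization (Submonoid.powers (t * a))) ∧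
      Nonempty (Localization S ≃+* R ⧸ Ideal.span {1 - t * a}) := by
  obtain ⟨a, haS, he⟩ := S.exists_mem_isIdempotentElem_mul hsat ht hmax
  have heS : t * a ∈ S := S.mul_mem ht haS
  have hdvd : ∀ s ∈ S, s ∣ t * a := fun s hs ↦ (hmax s hs).mul_right a
  have : IsLocalization S (Localization.Away (t * a)) :=
    .of_away_of_forall_dvd heS hdvd
  have : IsLocalization.Away (t * a) (R ⧸ Ideal.span {1 - t * a}) :=
    .quotient_of_isIdempotentElem he
  have : IsLocalization S (R ⧸ Ideal.span {1 - t * a}) := .of_away_of_forall_dvd heS hdvd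
  refine ⟨a, haS, he, ⟨?_⟩, ⟨?_⟩, ⟨?_⟩⟩
  · exact (AlgEquiv.prodQuotientOfIsIdempotentElem R he.one_sub he (sub_add_cancel 1 _)
      (by rw [sub_mul, one_mul, he.eq, sub_self])).toRingEquiv
  · exact (IsLocalization.algEquiv S _ _).toRingEquiv
  · exact (IsLocalization.algEquiv S _ _).toRingEquiv
end

section
/- Let R be a commutative ring and S a multiplicative subset. If R is S-coherent, then R_S is a coherent ring. -/
/-! Clearing denominators of generators writes a finitely generated ideal `J` of `R_S` as
`I_S` with `I` a finitely generated ideal of `R`. Localization is exact, so an `S`-finite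
presentation `0 → K → Rⁿ → I → 0` localizes to a presentation `0 → K_S → R_Sⁿ → J → 0`,
and `K_S` is finitely generated: `s • K ⊆ L` with `L` finitely generated and `s` a unit
in `R_S` forces `K_S = L_S`. -/

open Submodule
open scoped Pointwise

section

variable {R Rₛ M N : Type*} [CommRing R] [CommRing Rₛ] [Algebra R Rₛ] (S : Submonoid R)
  [IsLocalization S Rₛ] [AddCommGroup M] [Module R M] [AddCommGroup N] [Module R N]
  [Module Rₛ N] [IsScalarTower R Rₛ N]

theorem IsSFinite.fg_localized' (f : M →ₗ[R] N) [IsLocalizedModule S f] {K : Submodule R M}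
    (hK : IsSFinite S K) :
    (K.localized' Rₛ S f).FG := by
  obtain ⟨s, hs, L, ⟨T, hT⟩, hL⟩ := hK
  have hsK : (⟨s, hs⟩ : S) • K ≤ L.map K.subtype := by
    rintro _ ⟨m, hm, rfl⟩
    exact ⟨_, hL ⟨m, hm⟩, rfl⟩
  have hloc : K.localized' Rₛ S f = (L.map K.subtype).localized' Rₛ S f :=
    le_antisymm (localized'_le_localized'_of_smul_le Rₛ S f _ hsK)
      ((localized'gi Rₛ S f).gc.monotone_l (map_subtype_le K L))
  rw [hloc, ← hT, map_span, localized'_span]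
  exact fg_span ((T.finite_toSet.image _).image _)

theorem IsSFinitelyPresented.finitePresentation (hM : IsSFinitelyPresented S M)
    (f : M →ₗ[R] N) [IsLocalizedModule S f] :
    Module.FinitePresentation Rₛ N := by
  obtain ⟨n, g, hg, hK⟩ := hM
  let φ : (Fin n → R) →ₗ[R] (Fin n → Rₛ) :=
    LinearMap.pi fun i ↦ Algebra.linearMap R Rₛ ∘ₗ LinearMap.proj i
  let gₛ := (IsLocalizedModule.map S φ f g).extendScalarsOfIsLocalization S Rₛ
  have hsurj : Function.Surjective gₛ := by
    rw [← LinearMap.range_eq_top, ← LinearMap.localized'_range_eq_range_localizedMap,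
      LinearMap.range_eq_top.mpr hg, localized'_top]
  refine Module.finitePresentation_of_free_of_surjective gₛ hsurj ?_
  rw [← LinearMap.localized'_ker_eq_ker_localizedMap]
  exact hK.fg_localized' S φ

end

theorem Ideal.exists_fg_map_eq_of_isLocalization {R Rₛ : Type*} [CommRing R] [CommRing Rₛ]
    [Algebra R Rₛ] (S : Submonoid R) [IsLocalization S Rₛ] {J : Ideal Rₛ} (hJ : J.FG) :
    ∃ I : Ideal R, I.FG ∧ I.map (algebraMap R Rₛ) = J := by
  classical
  obtain ⟨T, rfl⟩ := hJ
  refine ⟨Ideal.span (IsLocalization.finsetIntegerMultiple S T),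
    fg_span (Finset.finite_toSet _), ?_⟩
  rw [Ideal.map_span, IsLocalization.finsetIntegerMultiple_image, Submonoid.smul_def,
    ← Set.image_smul, ← funext (algebraMap_smul Rₛ _), Set.image_smul, Ideal.span,
    span_smul_eq_of_isUnit _ _ (IsLocalization.map_units Rₛ _)]

/-- If `R` is `S`-coherent, then `R_S` is a coherent ring (every finitely
generated ideal of `R_S` is finitely presented). -/
theorem stmt16 {R : Type*} [CommRing R] (S : Submonoid R) (hcoh : IsSCoherent R S) :
    ∀ I : Ideal (Localization S), I.FG → Module.FinitePresentation (Localization S) I := by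
  intro J hJ
  obtain ⟨I, hI, rfl⟩ := Ideal.exists_fg_map_eq_of_isLocalization S hJ
  exact (hcoh I hI).finitePresentation S (Algebra.idealMap (Localization S) I)
end
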